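/- arXiv:1901.11020 — 5 statements merged into one kernel-verified Lean document; each statement's English description precedes it below -/
import Mathlib

section
/- For a representation M of the equi-oriented A_n quiver given by linear maps f_i: V_i → V_{i+1}, define r_{i,j}(M) as the rank of the composite f_{j-1}∘⋯∘f_i (and r_{i,i} = dim V_i). Then for all indices i < j ≤ k < l, one has r_{i,l} + r_{j,k} ≥ r_{i,k} + r_{j,l}. -/
open Module

/-- Rank-nullity for a map restricted to a submodule. -/
lemma finrank_map_add_inf_ker {K : Type*} [Field K] {V V' : Type*} [AddCommGroup V]
    [Module K V] [FiniteDimensional K V] [AddCommGroup V'] [Module K V']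
    (g : V →ₗ[K] V') (W : Submodule K V) :
    finrank K (W.map g) + finrank K (W ⊓ LinearMap.ker g : Submodule K V) = finrank K W := by
  have h := LinearMap.finrank_range_add_finrank_ker (g.domRestrict W)
  have hrange : LinearMap.range (g.domRestrict W) = W.map g := by
    ext x
    constructor
    · rintro ⟨⟨y, hy⟩, rfl⟩; exact ⟨y, hy, rfl⟩
    · rintro ⟨y, hy, rfl⟩; exact ⟨⟨y, hy⟩, rfl⟩
  have hker : (LinearMap.ker (g.domRestrict W)).map W.subtype
      = W ⊓ LinearMap.ker g := by
    ext x
    constructor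
    · rintro ⟨⟨y, hy⟩, h0, rfl⟩
      exact ⟨hy, by simpa using h0⟩
    · rintro ⟨hx, h0⟩
      exact ⟨⟨x, hx⟩, by simpa using h0, rfl⟩
  have hkerfr : finrank K (LinearMap.ker (g.domRestrict W))
      = finrank K (W ⊓ LinearMap.ker g : Submodule K V) := by
    rw [← hker, Submodule.finrank_map_subtype_eq]
  rw [hrange, hkerfr] at h
  exact h

/-- For a representation of the equi-oriented `A_n` quiver given by linear maps
`f i : V i → V (i+1)`, with `F i j` the composite `f (j-1) ∘ ⋯ ∘ f i` (so `F i i = id` and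
`r i j = rank (F i j)`, in particular `r i i = dim V i`), the rank collection satisfies the
submodularity inequality `r i l + r j k ≥ r i k + r j l` for all `i < j ≤ k < l`. -/
theorem rank_submodular (n : ℕ) (V : ℕ → Type) [∀ i, AddCommGroup (V i)]
    [∀ i, Module ℂ (V i)] [∀ i, FiniteDimensional ℂ (V i)]
    (f : ∀ i, V i →ₗ[ℂ] V (i + 1))
    (F : ∀ i j, V i →ₗ[ℂ] V j)
    (hFii : ∀ i, F i i = LinearMap.id)
    (hFstep : ∀ i j, i ≤ j → F i (j + 1) = (f j).comp (F i j))
    (r : ℕ → ℕ → ℕ)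
    (hr : ∀ i j, r i j = Module.finrank ℂ (LinearMap.range (F i j)))
    (i j k l : ℕ) (h1 : 1 ≤ i) (hij : i < j) (hjk : j ≤ k) (hkl : k < l) (hln : l ≤ n) :
    r i k + r j l ≤ r i l + r j k := by
  -- composition law
  have hcomp : ∀ a b c : ℕ, a ≤ b → b ≤ c → F a c = (F b c).comp (F a b) := by
    intro a b c hab hbc
    induction c with
    | zero =>
        have : b = 0 := Nat.le_zero.mp hbc
        subst this
        have : a = 0 := Nat.le_zero.mp hab
        subst this
        simp [hFii]
    | succ c ih =>
        rcases Nat.lt_or_ge b (c + 1) with hb | hb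
        · have hbc' : b ≤ c := Nat.lt_succ_iff.mp hb
          rw [hFstep a (c) (le_trans hab hbc'), hFstep b c hbc', ih hbc',
            LinearMap.comp_assoc]
        · have : b = c + 1 := le_antisymm hbc hb
          subst this
          simp [hFii]
  have key : ∀ a : ℕ, a ≤ k →
      r a k = r a l + finrank ℂ ((LinearMap.range (F a k)) ⊓ LinearMap.ker (F k l) : Submodule ℂ (V k)) := by
    intro a hak
    have h1 : F a l = (F k l).comp (F a k) := hcomp a k l hak (le_of_lt hkl)
    have h2 : LinearMap.range (F a l) = (LinearMap.range (F a k)).map (F k l) := by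
      rw [h1, LinearMap.range_comp]
    have h3 := finrank_map_add_inf_ker (F k l) (LinearMap.range (F a k))
    rw [hr a k, hr a l, h2, ← h3]
  have hle : LinearMap.range (F i k) ≤ LinearMap.range (F j k) := by
    rw [hcomp i j k (le_of_lt hij) hjk, LinearMap.range_comp]
    exact LinearMap.map_le_range
  rw [key i (le_trans (le_of_lt hij) hjk), key j hjk]
  have : finrank ℂ ((LinearMap.range (F i k)) ⊓ LinearMap.ker (F k l) : Submodule ℂ (V k))
      ≤ finrank ℂ ((LinearMap.range (F j k)) ⊓ LinearMap.ker (F k l) : Submodule ℂ (V k)) :=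
    Submodule.finrank_mono (inf_le_inf_right _ hle)
  omega
end

section
/- Let r be a rank collection on pairs 1 ≤ i < j ≤ n satisfying r_{i,j} ≥ N − 1 − e_j + e_i for all i < j (where 0 ≤ e_1 ≤ ⋯ ≤ e_n ≤ N), the rank inequality r_{i,l} + r_{j,k} ≥ r_{i,k} + r_{j,l} for i < j ≤ k < l with r_{k,k} := N, and suppose there exists a pair i < j with r_{i,j} < N − e_j + e_i. Then there exists an index i with r_{i,i+1} = N − 1 − e_{i+1} + e_i. -/
/-- Let `r` be a rank collection (with the convention `r k k = N`)
satisfying the submodularity inequality `r i l + r j k ≥ r i k + r j l` for `i < j ≤ k < l`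
and the lower bound `r i j ≥ N − 1 − e j + e i` for all `1 ≤ i < j ≤ n`, where
`0 ≤ e 1 ≤ ⋯ ≤ e n ≤ N`.  If there exists a pair `i < j` with `r i j < N − e j + e i`,
then there exists an index `i` with `r i (i+1) = N − 1 − e (i+1) + e i`. -/
theorem exists_adjacent_drop (n : ℕ) (hn : 2 ≤ n) (N : ℤ) (e : ℕ → ℤ)
    (he0 : 0 ≤ e 1) (hemono : ∀ i, 1 ≤ i → i < n → e i ≤ e (i + 1)) (heN : e n ≤ N)
    (r : ℕ → ℕ → ℤ) (hdiag : ∀ k, r k k = N)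
    (hsub : ∀ i j k l, 1 ≤ i → i < j → j ≤ k → k < l → l ≤ n →
      r i k + r j l ≤ r i l + r j k)
    (hlow : ∀ i j, 1 ≤ i → i < j → j ≤ n → N - 1 - e j + e i ≤ r i j)
    (hex : ∃ i j, 1 ≤ i ∧ i < j ∧ j ≤ n ∧ r i j < N - e j + e i) :
    ∃ i, 1 ≤ i ∧ i + 1 ≤ n ∧ r i (i + 1) = N - 1 - e (i + 1) + e i := by
  by_contra hcon
  push_neg at hcon
  obtain ⟨i, j, hi1, hij, hjn, hlt⟩ := hex
  have hadj : ∀ k, 1 ≤ k → k + 1 ≤ n → N - e (k + 1) + e k ≤ r k (k + 1) := by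
    intro k hk hk1
    have h1 := hlow k (k + 1) hk (Nat.lt_succ_self k) hk1
    have h2 := hcon k hk hk1
    omega
  have key : ∀ j, ∀ i, 1 ≤ i → i < j → j ≤ n → N - e j + e i ≤ r i j := by
    intro j
    induction j with
    | zero => intro i hi hij hjn; omega
    | succ m ih =>
      intro i hi hij hjn
      by_cases hc : i = m
      · subst hc; exact hadj i hi hjn
      · have him : i < m := by omega
        have h1 := ih i hi him (by omega)
        have h2 := hadj m (by omega) hjn
        have h3 := hsub i m m (m + 1) hi him le_rfl (Nat.lt_succ_self m) hjn
        have hd := hdiag m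
        linarith
  exact absurd (key j i hi1 hij hjn) (not_le.mpr hlt)
end

section
/- The number of non-crossing arc diagrams on n points (subsets A of {(i,j) : 1 ≤ i < j ≤ n} such that there is no pair of distinct elements (i,j), (k,l) ∈ A with i ≤ k < j ≤ l) equals the n-th Catalan number. -/
/-!
Classify a diagram on the points `a, …, b` by the arc starting at `a`. If there is none, it is a
diagram on `a + 1, …, b`. If it is `(a, j)`, the non-crossing condition forces every other arc
either under it, on `a + 1, …, j - 1`, or to its right, on `j, …, b`, and these two parts are
arbitrary diagrams. This is the Catalan recurrence `C (m + 1) = ∑ i ≤ m, C i * C (m - i)`.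
-/

open Finset

def arcs (a b : ℕ) : Finset (ℕ × ℕ) :=
  (Icc a b ×ˢ Icc a b).filter fun p => p.1 < p.2

-- The condition also rules out two arcs with a common left endpoint (`i = k`) or a common
-- right endpoint (`j = l`), but allows one arc to end where another starts (`j = k`).
def IsNoncrossing (A : Finset (ℕ × ℕ)) : Prop :=
  ∀ p ∈ A, ∀ q ∈ A, p ≠ q → ¬(p.1 ≤ q.1 ∧ q.1 < p.2 ∧ p.2 ≤ q.2)

instance : DecidablePred IsNoncrossing := fun A => by unfold IsNoncrossing; infer_instance

def noncrossingDiagrams (a b : ℕ) : Finset (Finset (ℕ × ℕ)) :=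
  (arcs a b).powerset.filter IsNoncrossing

variable {a b i j x y : ℕ} {p : ℕ × ℕ} {A B C : Finset (ℕ × ℕ)}

theorem mem_arcs : p ∈ arcs a b ↔ a ≤ p.1 ∧ p.1 < p.2 ∧ p.2 ≤ b := by
  simp only [arcs, mem_filter, mem_product, mem_Icc]
  omega

theorem arcs_subset_arcs {a' b' : ℕ} (ha : a ≤ a') (hb : b' ≤ b) : arcs a' b' ⊆ arcs a b :=
  fun p hp => by have := mem_arcs.1 hp; exact mem_arcs.2 (by omega)

theorem mem_noncrossingDiagrams :
    A ∈ noncrossingDiagrams a b ↔ A ⊆ arcs a b ∧ IsNoncrossing A := by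
  rw [noncrossingDiagrams, mem_filter, mem_powerset]

theorem arcs_eq_empty (h : b ≤ a) : arcs a b = ∅ :=
  eq_empty_of_forall_notMem fun _ hp => by have := mem_arcs.1 hp; omega

theorem noncrossingDiagrams_eq_singleton_empty (h : b ≤ a) : noncrossingDiagrams a b = {∅} := by
  ext A
  rw [mem_noncrossingDiagrams, arcs_eq_empty h, subset_empty, mem_singleton, and_iff_left_iff_imp]
  rintro rfl
  simp [IsNoncrossing]

theorem IsNoncrossing.mono (hA : IsNoncrossing A) (hBA : B ⊆ A) : IsNoncrossing B :=
  fun p hp q hq => hA p (hBA hp) q (hBA hq)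

theorem IsNoncrossing.eq_of_mem (hA : IsNoncrossing A) (hx : (i, x) ∈ A) (hy : (i, y) ∈ A)
    (hix : i < x) (hiy : i < y) : x = y := by
  by_contra hxy
  rcases Nat.lt_or_gt_of_ne hxy with hlt | hlt
  · exact hA _ hx _ hy (by simpa using hxy) (by dsimp only; omega)
  · exact hA _ hy _ hx (by simpa using Ne.symm hxy) (by dsimp only; omega)

theorem IsNoncrossing.inside_or_right_of_mem (hA : IsNoncrossing A) (hAab : A ⊆ arcs a b)
    (haj : (a, j) ∈ A) (hp : p ∈ A) (hpaj : p ≠ (a, j)) :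
    (a < p.1 ∧ p.2 < j) ∨ j ≤ p.1 := by
  have := hA _ haj _ hp hpaj.symm
  have := hA _ hp _ haj hpaj
  have := mem_arcs.1 (hAab hp)
  have : p.1 ≠ a ∨ p.2 ≠ j := by
    by_contra!
    exact hpaj (Prod.ext this.1 this.2)
  omega

theorem IsNoncrossing.insert_union (hB : IsNoncrossing B) (hC : IsNoncrossing C)
    (hBaj : B ⊆ arcs (a + 1) (j - 1)) (hCj : C ⊆ arcs j b) :
    IsNoncrossing (insert (a, j) (B ∪ C)) := by
  have hBaj : ∀ p ∈ B, a < p.1 ∧ p.1 < p.2 ∧ p.2 < j := fun p hp => by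
    have := mem_arcs.1 (hBaj hp); omega
  have hCj : ∀ p ∈ C, j ≤ p.1 ∧ p.1 < p.2 := fun p hp => by
    have := mem_arcs.1 (hCj hp); omega
  intro p hp q hq hpq
  simp only [mem_insert, mem_union] at hp hq
  rcases hp with rfl | hp | hp <;> rcases hq with rfl | hq | hq
  · exact absurd rfl hpq
  · have := hBaj q hq; dsimp only; omega
  · have := hCj q hq; dsimp only; omega
  · have := hBaj p hp; dsimp only; omega
  · exact hB p hp q hq hpq
  · have := hBaj p hp; have := hCj q hq; omega
  · have := hCj p hp; dsimp only; omega
  · have := hCj p hp; have := hBaj q hq; omega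
  · exact hC p hp q hq hpq

theorem card_filter_mem_noncrossingDiagrams (haj : a < j) (hjb : j ≤ b) :
    ((noncrossingDiagrams a b).filter ((a, j) ∈ ·)).card =
      (noncrossingDiagrams (a + 1) (j - 1)).card * (noncrossingDiagrams j b).card := by
  rw [← card_product]
  refine card_nbij' (fun A => (A.filter (·.2 < j), A.filter (j ≤ ·.1)))
    (fun BC => insert (a, j) (BC.1 ∪ BC.2)) ?_ ?_ ?_ ?_
  · intro A hA
    obtain ⟨hA, haj⟩ := mem_filter.1 hA
    obtain ⟨hAab, hA⟩ := mem_noncrossingDiagrams.1 hA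
    refine mem_product.2
      ⟨mem_noncrossingDiagrams.2 ⟨fun p hp => ?_, hA.mono (filter_subset _ _)⟩,
        mem_noncrossingDiagrams.2 ⟨fun p hp => ?_, hA.mono (filter_subset _ _)⟩⟩ <;>
    · obtain ⟨hp, hpj⟩ := mem_filter.1 hp
      have := mem_arcs.1 (hAab hp)
      have := hA.inside_or_right_of_mem hAab haj hp (by rintro rfl; dsimp only at hpj; omega)
      rw [mem_arcs]
      omega
  · rintro ⟨B, C⟩ hBC
    obtain ⟨⟨hBaj, hB⟩, ⟨hCj, hC⟩⟩ :=
      (mem_product.1 hBC).imp mem_noncrossingDiagrams.1 mem_noncrossingDiagrams.1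
    refine mem_filter.2
      ⟨mem_noncrossingDiagrams.2 ⟨?_, hB.insert_union hC hBaj hCj⟩, mem_insert_self _ _⟩
    exact insert_subset (mem_arcs.2 ⟨le_rfl, haj, hjb⟩) (union_subset
      (hBaj.trans (arcs_subset_arcs a.le_succ (by omega)))
      (hCj.trans (arcs_subset_arcs haj.le le_rfl)))
  · intro A hA
    obtain ⟨hA, haj⟩ := mem_filter.1 hA
    obtain ⟨hAab, hA⟩ := mem_noncrossingDiagrams.1 hA
    ext p
    simp only [mem_insert, mem_union, mem_filter]
    constructor
    · rintro (rfl | ⟨hp, -⟩ | ⟨hp, -⟩) <;> assumption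
    · intro hp
      by_cases hpaj : p = (a, j)
      · exact Or.inl hpaj
      · have := hA.inside_or_right_of_mem hAab haj hp hpaj
        tauto
  · rintro ⟨B, C⟩ hBC
    obtain ⟨hBaj, hCj⟩ := (mem_product.1 hBC).imp (mem_noncrossingDiagrams.1 · |>.1)
      (mem_noncrossingDiagrams.1 · |>.1)
    have hB : ∀ p ∈ B, p.1 < j ∧ p.2 < j := fun p hp => by
      have := mem_arcs.1 (hBaj hp); omega
    have hC : ∀ p ∈ C, j ≤ p.1 ∧ j < p.2 := fun p hp => by
      have := mem_arcs.1 (hCj hp); omega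
    simp only [filter_insert, filter_union, lt_irrefl, haj.not_ge, if_false,
      filter_true_of_mem fun p hp => (hB p hp).2, filter_true_of_mem fun p hp => (hC p hp).1,
      filter_false_of_mem fun p hp => not_le.2 (hB p hp).1,
      filter_false_of_mem fun p hp => not_lt.2 (hC p hp).2.le, union_empty, empty_union]

theorem filter_forall_fst_ne_noncrossingDiagrams :
    (noncrossingDiagrams a b).filter (fun A => ∀ p ∈ A, p.1 ≠ a) =
      noncrossingDiagrams (a + 1) b := by
  ext A
  simp only [mem_filter, mem_noncrossingDiagrams]
  constructor
  · rintro ⟨⟨hAab, hA⟩, ha⟩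
    refine ⟨fun p hp => ?_, hA⟩
    have := mem_arcs.1 (hAab hp)
    have := ha p hp
    exact mem_arcs.2 (by omega)
  · rintro ⟨hA1, hA⟩
    refine ⟨⟨hA1.trans (arcs_subset_arcs a.le_succ le_rfl), hA⟩, fun p hp => ?_⟩
    have := mem_arcs.1 (hA1 hp)
    omega

theorem filter_not_forall_fst_ne_noncrossingDiagrams :
    (noncrossingDiagrams a b).filter (fun A => ¬∀ p ∈ A, p.1 ≠ a) =
      (Ioc a b).biUnion fun j => (noncrossingDiagrams a b).filter ((a, j) ∈ ·) := by
  ext A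
  simp only [mem_filter, mem_biUnion, mem_Ioc, not_forall, not_not]
  constructor
  · rintro ⟨hA, ⟨i, j⟩, hij, rfl⟩
    have := mem_arcs.1 ((mem_noncrossingDiagrams.1 hA).1 hij)
    exact ⟨j, ⟨this.2.1, this.2.2⟩, hA, hij⟩
  · rintro ⟨j, -, hA, haj⟩
    exact ⟨hA, _, haj, rfl⟩

theorem pairwiseDisjoint_filter_mem_noncrossingDiagrams :
    (Ioc a b : Set ℕ).PairwiseDisjoint fun j =>
      (noncrossingDiagrams a b).filter ((a, j) ∈ ·) := by
  intro x hx y hy hxy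
  refine disjoint_filter.2 fun A hA hax hay => hxy ?_
  obtain ⟨-, hA⟩ := mem_noncrossingDiagrams.1 hA
  exact hA.eq_of_mem hax hay (mem_Ioc.1 hx).1 (mem_Ioc.1 hy).1

theorem card_noncrossingDiagrams_eq_add_sum (a b : ℕ) :
    (noncrossingDiagrams a b).card = (noncrossingDiagrams (a + 1) b).card +
      ∑ j ∈ Ioc a b,
        (noncrossingDiagrams (a + 1) (j - 1)).card * (noncrossingDiagrams j b).card := by
  rw [← card_filter_add_card_filter_not (fun A => ∀ p ∈ A, p.1 ≠ a),
    filter_forall_fst_ne_noncrossingDiagrams, filter_not_forall_fst_ne_noncrossingDiagrams,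
    card_biUnion pairwiseDisjoint_filter_mem_noncrossingDiagrams]
  congr 1
  exact sum_congr rfl fun j hj =>
    card_filter_mem_noncrossingDiagrams (mem_Ioc.1 hj).1 (mem_Ioc.1 hj).2

theorem card_noncrossingDiagrams (a b : ℕ) :
    (noncrossingDiagrams a b).card = catalan (b + 1 - a) := by
  induction h : b + 1 - a using Nat.strong_induction_on generalizing a b with
  | _ m ih =>
    rcases Nat.lt_or_ge b a with hba | hab
    · rw [noncrossingDiagrams_eq_singleton_empty hba.le, card_singleton, show m = 0 by omega,
        catalan_zero]
    obtain ⟨k, rfl, hk⟩ : ∃ k, m = k + 1 ∧ b - a = k := ⟨b - a, by omega, rfl⟩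
    rw [card_noncrossingDiagrams_eq_add_sum, catalan_succ',
      Nat.sum_antidiagonal_eq_sum_range_succ_mk, sum_range_succ, add_comm,
      ← Ico_add_one_add_one_eq_Ioc, sum_Ico_eq_sum_range, Nat.add_sub_add_right, hk]
    dsimp only
    rw [Nat.sub_self, catalan_zero, mul_one, ih k (by omega) (a + 1) b (by omega)]
    refine congrArg (· + _) (sum_congr rfl fun i hi => ?_)
    have := mem_range.1 hi
    rw [ih i (by omega) _ _ (by omega), ih (k - i) (by omega) _ _ (by omega)]

/-- The number of non-crossing arc diagrams on `n` points — subsets `A` of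
`{(i,j) : 1 ≤ i < j ≤ n}` such that no two distinct arcs `(i,j), (k,l) ∈ A` satisfy
`i ≤ k < j ≤ l` — equals the `n`-th Catalan number. -/
theorem noncrossing_arc_diagrams_card (n : ℕ) :
    (((Finset.Icc 1 n ×ˢ Finset.Icc 1 n).filter fun p => p.1 < p.2).powerset.filter
        fun A => ∀ p ∈ A, ∀ q ∈ A, p ≠ q →
          ¬(p.1 ≤ q.1 ∧ q.1 < p.2 ∧ p.2 ≤ q.2)).card = catalan n :=
  (card_noncrossingDiagrams 1 n).trans (congrArg catalan (Nat.add_sub_cancel n 1))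
end

section
/- The generating function B_n(x_1,…,x_n) = Σ_{0 ≤ e_1 ≤ ⋯ ≤ e_n} B_e x_1^{e_1} x_2^{e_2−e_1} ⋯ x_n^{e_n−e_{n-1}}, where B_e is the number of lattice points (f_I)_{∅≠I⊆{1,…,n-1}} with f_I ∈ Z_{≥0} and Σ_{I ∋ i} f_I ≤ e_{i+1} − e_i for all i, equals ∏_{i=1}^n (1 − x_i)^{-1} ∏_{∅ ≠ I ⊆ {2,…,n}} (1 − ∏_{i∈I} x_i)^{-1} as a formal power series. -/
/-! `(1 - x^m)⁻¹` is the geometric series `Σ_k x^(k • m)`. Hence the coefficient of `x^d` in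
`∏_{i ≤ n} (1 - x_i)⁻¹ · ∏_J (1 - x^(J + 1))⁻¹` counts the tuples `(a, f)` with
`a + Σ_J f_J • 𝟙_(J + 1) = d`, where `J` runs over the non-empty subsets of `{1, …, n - 1}`
(so that `J + 1` runs over those of `{2, …, n}`). When `d` is supported on `{1, …, n}` the vector
`a` is just slack, so this counts the `f` with `Σ_J f_J • 𝟙_(J + 1) ≤ d`, and evaluated at
`i + 1` these are exactly the inequalities `Σ_{J ∋ i} f_J ≤ d (i + 1)` that define `B_e`. -/

open Finset

namespace Finsupp

variable {σ : Type*}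

theorem exists_nsmul_eq_iff_of_le {m e : σ →₀ ℕ} (h : m ≤ e) :
    (∃ k : ℕ, k • m = e) ↔ ∃ k : ℕ, k • m = e - m := by
  constructor
  · rintro ⟨_ | k, rfl⟩
    · exact ⟨0, by simp⟩
    · exact ⟨k, by rw [succ_nsmul, add_tsub_cancel_right]⟩
  · rintro ⟨k, hk⟩
    exact ⟨k + 1, by rw [succ_nsmul, hk, tsub_add_cancel_of_le h]⟩

theorem nsmul_left_injective_of_ne_zero {m : σ →₀ ℕ} (hm : m ≠ 0) :
    Function.Injective fun k : ℕ => k • m := by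
  obtain ⟨i, hi⟩ := ne_iff.mp hm
  intro k l h
  have := DFunLike.congr_fun h i
  simp only [smul_apply, smul_eq_mul] at this
  exact Nat.eq_of_mul_eq_mul_right (Nat.pos_of_ne_zero hi) this

theorem sum_smul_single_one_apply_of_support {T : Finset σ} {a : σ → ℕ}
    (ha : ∀ i, a i ≠ 0 → i ∈ T) (j : σ) : (∑ i ∈ T, a i • single i 1) j = a j := by
  classical
  simp only [finsetSum_apply, smul_single, smul_eq_mul, mul_one, single_apply, Finset.sum_ite_eq']
  split_ifs with hj
  · rfl
  · exact (not_imp_comm.mp (ha j) hj).symm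

theorem support_sum_smul_subset {ι : Type*} {t : Finset ι} {T : Finset σ} {m : ι → σ →₀ ℕ}
    (hm : ∀ x ∈ t, (m x).support ⊆ T) (k : ι → ℕ) :
    (∑ x ∈ t, k x • m x).support ⊆ T := by
  classical
  exact support_finsetSum.trans (biUnion_subset.mpr fun x hx => support_smul.trans (hm x hx))

theorem ncard_add_slack_eq_ncard_le {κ : Type*} (T : Finset σ) (s : Finset κ)
    (m : κ → σ →₀ ℕ) {d : σ →₀ ℕ} (hd : d.support ⊆ T) :
    {k : σ ⊕ κ → ℕ | (∀ x, k x ≠ 0 → x ∈ T.disjSum s) ∧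
        ∑ x ∈ T.disjSum s, k x • Sum.elim (fun i => single i 1) m x = d}.ncard =
      {f : κ → ℕ | (∀ j, f j ≠ 0 → j ∈ s) ∧ ∑ j ∈ s, f j • m j ≤ d}.ncard := by
  have hsum (k : σ ⊕ κ → ℕ) :
      ∑ x ∈ T.disjSum s, k x • Sum.elim (fun i => single i 1) m x =
        ∑ i ∈ T, k (.inl i) • single i 1 + ∑ j ∈ s, k (.inr j) • m j :=
    sum_disjSum _ _ _
  refine Set.ncard_congr (fun k _ => k ∘ Sum.inr) ?_ ?_ ?_
  · rintro k ⟨hks, hkd⟩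
    refine ⟨fun j hj => by simpa using hks (.inr j) hj, ?_⟩
    rw [← hkd, hsum]
    exact le_add_self
  · intro k l hk hl h
    have hinr (j : κ) : k (.inr j) = l (.inr j) := congrFun h j
    have hslack : ∑ i ∈ T, k (.inl i) • single i 1 =
        ∑ i ∈ T, l (.inl i) • single i 1 := by
      have := hk.2.trans hl.2.symm
      rw [hsum, hsum] at this
      simpa only [hinr, add_left_inj] using this
    funext x
    rcases x with i | j
    · have := DFunLike.congr_fun hslack i
      rwa [sum_smul_single_one_apply_of_support fun i h => by simpa using hk.1 (.inl i) h,
        sum_smul_single_one_apply_of_support fun i h => by simpa using hl.1 (.inl i) h]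
        at this
    · exact hinr j
  · rintro f ⟨hfs, hfd⟩
    have hT : ∀ i, (d - ∑ j ∈ s, f j • m j) i ≠ 0 → i ∈ T := fun i h =>
      hd (mem_support_iff.mpr fun hdi => h (by simp [hdi]))
    have hslack : ∑ i ∈ T, (d - ∑ j ∈ s, f j • m j) i • single i 1 =
        d - ∑ j ∈ s, f j • m j :=
      ext (sum_smul_single_one_apply_of_support hT)
    refine ⟨Sum.elim (fun i => (d - ∑ j ∈ s, f j • m j) i) f, ⟨?_, ?_⟩, rfl⟩
    · rintro (i | j) h
      · exact inl_mem_disjSum.mpr (hT i h)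
      · simpa using hfs j h
    · simp only [hsum, Sum.elim_inl, Sum.elim_inr, hslack, tsub_add_cancel_of_le hfd]

end Finsupp

namespace MvPowerSeries

variable {σ R : Type*}

open Classical in
noncomputable def geom [Semiring R] (m : σ →₀ ℕ) : MvPowerSeries σ R :=
  fun e => if ∃ k : ℕ, k • m = e then 1 else 0

open Classical in
theorem coeff_geom [Semiring R] (m e : σ →₀ ℕ) :
    coeff e (geom m : MvPowerSeries σ R) = if ∃ k : ℕ, k • m = e then 1 else 0 := rfl

theorem one_sub_monomial_mul_geom [CommRing R] {m : σ →₀ ℕ} (hm : m ≠ 0) :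
    (1 - monomial m (1 : R)) * geom m = 1 := by
  classical
  ext e
  rw [sub_mul, one_mul, map_sub, coeff_monomial_mul, one_mul, coeff_one, coeff_geom, coeff_geom]
  by_cases he : e = 0
  · subst he
    simp [hm]
  by_cases hme : m ≤ e
  · simp [he, hme, Finsupp.exists_nsmul_eq_iff_of_le hme]
  · have : ¬ ∃ k : ℕ, k • m = e := by
      rintro ⟨_ | k, rfl⟩
      · exact he (zero_smul _ _)
      · exact hme (by rw [succ_nsmul]; exact le_add_self)
    simp [he, hme, this]

theorem prod_one_sub_monomial_mul_prod_geom [CommRing R] {ι : Type*} (s : Finset ι)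
    {m : ι → σ →₀ ℕ} (hm : ∀ i ∈ s, m i ≠ 0) :
    (∏ i ∈ s, (1 - monomial (m i) (1 : R))) * ∏ i ∈ s, geom (m i) = 1 := by
  rw [← prod_mul_distrib]
  exact prod_eq_one fun i hi => one_sub_monomial_mul_geom (hm i hi)

theorem coeff_prod_geom [CommSemiring R] {ι : Type*} (s : Finset ι)
    {m : ι → σ →₀ ℕ} (hm : ∀ i ∈ s, m i ≠ 0) (d : σ →₀ ℕ) :
    coeff d (∏ i ∈ s, geom (m i) : MvPowerSeries σ R) =
      {k : ι → ℕ | (∀ i, k i ≠ 0 → i ∈ s) ∧ ∑ i ∈ s, k i • m i = d}.ncard := by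
  classical
  rw [coeff_prod]
  simp only [coeff_geom, prod_boole, sum_boole]
  rw [← Set.ncard_coe_finset]
  congr 1
  symm
  refine Set.ncard_congr (fun k hk => Finsupp.onFinset s (fun i => k i • m i) fun i hi => hk.1 i
    (left_ne_zero_of_smul hi)) ?_ ?_ ?_
  · rintro k ⟨hks, hkd⟩
    simp only [coe_filter, mem_finsuppAntidiag, Set.mem_ofPred_eq, Finsupp.onFinset_apply]
    exact ⟨⟨hkd, Finsupp.support_onFinset_subset⟩, fun i _ => ⟨k i, rfl⟩⟩
  · intro k l hk hl h
    funext i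
    by_cases hi : i ∈ s
    · exact Finsupp.nsmul_left_injective_of_ne_zero (hm i hi)
        (by simpa using DFunLike.congr_fun h i)
    · rw [not_imp_comm.mp (hk.1 i) hi, not_imp_comm.mp (hl.1 i) hi]
  · intro l hl
    simp only [coe_filter, mem_finsuppAntidiag, Set.mem_ofPred_eq] at hl
    obtain ⟨⟨hld, hls⟩, hl⟩ := hl
    choose! k hk using hl
    refine ⟨fun i => if i ∈ s then k i else 0, ⟨fun i => by simp_all, ?_⟩, ?_⟩
    · rw [← hld]
      exact sum_congr rfl fun i hi => by simp [hi, hk i hi]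
    · ext i
      by_cases hi : i ∈ s
      · simp [hi, hk i hi]
      · simp [hi, Finsupp.notMem_support_iff.mp (mt (@hls i) hi)]

theorem coeff_prod_geom_X_mul_prod_geom [CommSemiring R] [DecidableEq σ] {κ : Type*}
    (T : Finset σ) (s : Finset κ) {m : κ → σ →₀ ℕ} (hm : ∀ j ∈ s, m j ≠ 0)
    (hmT : ∀ j ∈ s, (m j).support ⊆ T) (d : σ →₀ ℕ) :
    coeff d ((∏ i ∈ T, geom (Finsupp.single i 1)) * ∏ j ∈ s, geom (m j) : MvPowerSeries σ R) =
      if d.support ⊆ T then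
        {f : κ → ℕ | (∀ j, f j ≠ 0 → j ∈ s) ∧ ∑ j ∈ s, f j • m j ≤ d}.ncard
      else 0 := by
  set m' : σ ⊕ κ → σ →₀ ℕ := Sum.elim (fun i => Finsupp.single i 1) m
  have hm' : ∀ x ∈ T.disjSum s, m' x ≠ 0 := by
    rintro (i | j) hx
    · simp [m']
    · exact hm j (by simpa using hx)
  have hm'T : ∀ x ∈ T.disjSum s, (m' x).support ⊆ T := by
    rintro (i | j) hx
    · exact Finsupp.support_single_subset.trans (by simpa using hx)
    · exact hmT j (by simpa using hx)
  have hprod : (∏ i ∈ T, geom (Finsupp.single i 1)) * ∏ j ∈ s, geom (m j) =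
      (∏ x ∈ T.disjSum s, geom (m' x) : MvPowerSeries σ R) := by
    rw [prod_disjSum]
    rfl
  rw [hprod, coeff_prod_geom _ hm']
  split_ifs with hd
  · rw [Finsupp.ncard_add_slack_eq_ncard_le T s m hd]
  · have hempty : {k : σ ⊕ κ → ℕ | (∀ x, k x ≠ 0 → x ∈ T.disjSum s) ∧
        ∑ x ∈ T.disjSum s, k x • m' x = d} = ∅ :=
      Set.eq_empty_of_forall_notMem fun k hk =>
        hd (hk.2 ▸ Finsupp.support_sum_smul_subset hm'T k)
    rw [hempty, Set.ncard_empty, Nat.cast_zero]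

end MvPowerSeries

noncomputable def succIndicator (J : Finset ℕ) : ℕ →₀ ℕ := ∑ j ∈ J, Finsupp.single (j + 1) 1

theorem succIndicator_apply_zero (J : Finset ℕ) : succIndicator J 0 = 0 := by
  simp [succIndicator, Finsupp.finsetSum_apply]

theorem succIndicator_apply_succ (J : Finset ℕ) (i : ℕ) :
    succIndicator J (i + 1) = if i ∈ J then 1 else 0 := by
  simp [succIndicator, Finsupp.finsetSum_apply, Finsupp.single_apply]

theorem succIndicator_ne_zero {J : Finset ℕ} (hJ : J.Nonempty) : succIndicator J ≠ 0 := by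
  obtain ⟨i, hi⟩ := hJ
  exact Finsupp.ne_iff.mpr ⟨i + 1, by simp [succIndicator_apply_succ, hi]⟩

theorem support_succIndicator_subset {J : Finset ℕ} {n : ℕ} (hJ : J ⊆ Icc 1 (n - 1)) :
    (succIndicator J).support ⊆ Icc 1 n := by
  intro j hj
  obtain _ | i := j
  · simp [succIndicator_apply_zero] at hj
  · have := mem_Icc.mp (hJ (by simpa [succIndicator_apply_succ] using hj))
    rw [mem_Icc]
    omega

theorem prod_X_succ (J : Finset ℕ) :
    ∏ j ∈ J, (MvPowerSeries.X (j + 1) : MvPowerSeries ℕ ℚ) =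
      MvPowerSeries.monomial (succIndicator J) 1 := by
  simp only [MvPowerSeries.X_def, MvPowerSeries.prod_monomial, prod_const_one, succIndicator]

theorem image_succ_Icc_one_pred (n : ℕ) : (Icc 1 (n - 1)).image (· + 1) = Icc 2 n := by
  ext i
  simp only [mem_image, mem_Icc]
  constructor
  · rintro ⟨j, hj, rfl⟩
    omega
  · intro hi
    exact ⟨i - 1, by omega, by omega⟩

theorem prod_one_sub_prod_X_Icc_two (n : ℕ) :
    ∏ I ∈ (Icc 2 n).powerset.filter (fun I => I.Nonempty),
        (1 - ∏ i ∈ I, (MvPowerSeries.X i : MvPowerSeries ℕ ℚ)) =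
      ∏ J ∈ (Icc 1 (n - 1)).powerset.filter (fun J => J.Nonempty),
        (1 - MvPowerSeries.monomial (succIndicator J) 1) := by
  have hinj : Function.Injective fun J : Finset ℕ => J.image (· + 1) :=
    image_injective (add_left_injective 1)
  rw [← image_succ_Icc_one_pred, powerset_image, filter_image, prod_image hinj.injOn]
  refine prod_congr (by simp) fun J _ => ?_
  rw [prod_image (add_left_injective 1).injOn, prod_X_succ]

theorem sum_smul_succIndicator_apply_succ (S : Finset (Finset ℕ)) (f : Finset ℕ → ℕ) (i : ℕ) :
    (∑ J ∈ S, f J • succIndicator J) (i + 1) = ∑ J ∈ S with i ∈ J, f J := by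
  simp [Finsupp.finsetSum_apply, succIndicator_apply_succ, sum_filter]

theorem sum_smul_succIndicator_le_iff {n : ℕ} (f : Finset ℕ → ℕ) (d : ℕ →₀ ℕ) :
    ∑ J ∈ (Icc 1 (n - 1)).powerset.filter (fun J => J.Nonempty), f J • succIndicator J ≤ d ↔
      ∀ i ∈ Icc 1 (n - 1),
        ∑ I ∈ (Icc 1 (n - 1)).powerset.filter (fun I => i ∈ I), f I ≤ d (i + 1) := by
  have happly (i : ℕ) :
      (∑ J ∈ (Icc 1 (n - 1)).powerset.filter (fun J => J.Nonempty), f J • succIndicator J)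
        (i + 1) = ∑ I ∈ (Icc 1 (n - 1)).powerset.filter (fun I => i ∈ I), f I := by
    rw [sum_smul_succIndicator_apply_succ, filter_filter]
    exact sum_congr (filter_congr fun J _ => ⟨And.right, fun h => ⟨⟨i, h⟩, h⟩⟩) fun _ _ => rfl
  rw [Finsupp.le_def]
  constructor
  · intro h i _
    exact happly i ▸ h (i + 1)
  · rintro h (_ | i)
    · simp [Finsupp.finsetSum_apply, succIndicator_apply_zero]
    · rw [happly]
      by_cases hi : i ∈ Icc 1 (n - 1)
      · exact h i hi
      · rw [sum_eq_zero fun I hI => absurd (mem_powerset.mp (mem_filter.mp hI).1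
          (mem_filter.mp hI).2) hi]
        exact Nat.zero_le _

theorem setOf_forall_sum_le_eq (n : ℕ) (d : ℕ →₀ ℕ) :
    {f : Finset ℕ → ℕ |
        (∀ I, f I ≠ 0 → I.Nonempty ∧ I ⊆ Icc 1 (n - 1)) ∧
        ∀ i ∈ Icc 1 (n - 1),
          (∑ I ∈ ((Icc 1 (n - 1)).powerset.filter fun I => i ∈ I), f I) ≤ d (i + 1)} =
      {f : Finset ℕ → ℕ |
        (∀ J, f J ≠ 0 → J ∈ (Icc 1 (n - 1)).powerset.filter (fun J => J.Nonempty)) ∧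
        ∑ J ∈ (Icc 1 (n - 1)).powerset.filter (fun J => J.Nonempty),
          f J • succIndicator J ≤ d} := by
  ext f
  simp only [Set.mem_ofPred_eq, mem_filter, mem_powerset, sum_smul_succIndicator_le_iff, and_comm]

theorem prod_geom_mul_prod_one_sub_eq_one (n : ℕ) :
    (∏ i ∈ Icc 1 n, MvPowerSeries.geom (Finsupp.single i 1)) *
        (∏ J ∈ (Icc 1 (n - 1)).powerset.filter (fun J => J.Nonempty),
          MvPowerSeries.geom (succIndicator J)) *
        (∏ i ∈ Icc 1 n, (1 - MvPowerSeries.X i)) *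
        (∏ I ∈ (Icc 2 n).powerset.filter (fun I => I.Nonempty),
          (1 - ∏ i ∈ I, MvPowerSeries.X i)) = (1 : MvPowerSeries ℕ ℚ) := by
  have h1 := MvPowerSeries.prod_one_sub_monomial_mul_prod_geom (R := ℚ) (Icc 1 n)
    (m := fun i => Finsupp.single i 1) fun i _ => by simp
  have h2 := MvPowerSeries.prod_one_sub_monomial_mul_prod_geom (R := ℚ)
    ((Icc 1 (n - 1)).powerset.filter (fun J => J.Nonempty)) (m := succIndicator)
    fun J hJ => succIndicator_ne_zero (mem_filter.mp hJ).2
  rw [prod_one_sub_prod_X_Icc_two]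
  simp only [MvPowerSeries.X_def]
  refine Eq.trans ?_ ((congrArg₂ (· * ·) h1 h2).trans (one_mul 1))
  ring

theorem generating_function_flat_irreducible_general (n : ℕ)
    (B : MvPowerSeries ℕ ℚ)
    (hB : ∀ d : ℕ →₀ ℕ, d.support ⊆ Finset.Icc 1 n →
      MvPowerSeries.coeff (R := ℚ) d B =
        Set.ncard {f : Finset ℕ → ℕ |
          (∀ I, f I ≠ 0 → I.Nonempty ∧ I ⊆ Finset.Icc 1 (n - 1)) ∧
          ∀ i ∈ Finset.Icc 1 (n - 1),
            (∑ I ∈ ((Finset.Icc 1 (n - 1)).powerset.filter fun I => i ∈ I), f I)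
              ≤ d (i + 1)})
    (hB0 : ∀ d : ℕ →₀ ℕ, ¬ d.support ⊆ Finset.Icc 1 n →
      MvPowerSeries.coeff (R := ℚ) d B = 0) :
    B * (∏ i ∈ Finset.Icc 1 n, (1 - MvPowerSeries.X i)) *
        (∏ I ∈ (Finset.Icc 2 n).powerset.filter (fun I => I.Nonempty),
          (1 - ∏ i ∈ I, MvPowerSeries.X i)) = 1 := by
  set S := (Icc 1 (n - 1)).powerset.filter (fun J => J.Nonempty)
  have hS : ∀ J ∈ S, J.Nonempty ∧ J ⊆ Icc 1 (n - 1) := fun J hJ => by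
    simpa [S, and_comm] using hJ
  have hB_eq : B = (∏ i ∈ Icc 1 n, MvPowerSeries.geom (Finsupp.single i 1)) *
      ∏ J ∈ S, MvPowerSeries.geom (succIndicator J) := by
    ext d
    rw [MvPowerSeries.coeff_prod_geom_X_mul_prod_geom _ _
      (fun J hJ => succIndicator_ne_zero (hS J hJ).1)
      fun J hJ => support_succIndicator_subset (hS J hJ).2]
    split_ifs with hd
    · rw [hB d hd, setOf_forall_sum_le_eq]
    · exact hB0 d hd
  rw [hB_eq]
  exact prod_geom_mul_prod_one_sub_eq_one n

/-- **Theorem B.** Let `B_n(x_1,…,x_n) = Σ_{0 ≤ e_1 ≤ ⋯ ≤ e_n} B_e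
x_1^{e_1} x_2^{e_2−e_1} ⋯ x_n^{e_n−e_{n-1}}`, where `B_e` is the number of tuples of
non-negative integers `(f_I)` indexed by non-empty subsets `I ⊆ {1,…,n-1}` with
`Σ_{I ∋ i} f_I ≤ e_{i+1} − e_i` for all `i`.  Working in `ℚ[[x_1,…,x_n]]` (variables
indexed by `{1,…,n} ⊆ ℕ`), the coefficient of the monomial with exponent vector `d`
(supported on `{1,…,n}`) is `B_e` for the differences `e_{i+1} − e_i = d (i+1)`.  Then
`B_n = ∏_{i=1}^n (1 − x_i)⁻¹ ∏_{∅ ≠ I ⊆ {2,…,n}} (1 − ∏_{i∈I} x_i)⁻¹`, stated as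
`B_n · ∏_{i=1}^n (1 − x_i) · ∏_{∅ ≠ I ⊆ {2,…,n}} (1 − ∏_{i∈I} x_i) = 1`. -/
theorem generating_function_flat_irreducible (n : ℕ) (hn : 1 ≤ n)
    (B : MvPowerSeries ℕ ℚ)
    (hB : ∀ d : ℕ →₀ ℕ, d.support ⊆ Finset.Icc 1 n →
      MvPowerSeries.coeff (R := ℚ) d B =
        Set.ncard {f : Finset ℕ → ℕ |
          (∀ I, f I ≠ 0 → I.Nonempty ∧ I ⊆ Finset.Icc 1 (n - 1)) ∧
          ∀ i ∈ Finset.Icc 1 (n - 1),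
            (∑ I ∈ ((Finset.Icc 1 (n - 1)).powerset.filter fun I => i ∈ I), f I)
              ≤ d (i + 1)})
    (hB0 : ∀ d : ℕ →₀ ℕ, ¬ d.support ⊆ Finset.Icc 1 n →
      MvPowerSeries.coeff (R := ℚ) d B = 0) :
    B * (∏ i ∈ Finset.Icc 1 n, (1 - MvPowerSeries.X i)) *
        (∏ I ∈ (Finset.Icc 2 n).powerset.filter (fun I => I.Nonempty),
          (1 - ∏ i ∈ I, MvPowerSeries.X i)) = 1 :=
  generating_function_flat_irreducible_general n B hB hB0
end

section
/- Let f_i : C^{n+1} → C^{n+1} (1 ≤ i ≤ n-1) be the linear maps of the transversal slice: (f_i)_{p,q} = 1 if p = q ≠ i+1, (f_i)_{p,q} = λ_{p,q} if 2 ≤ p ≤ i+1 ≤ q ≤ n, and 0 otherwise. Then the composition F = f_{n-1}∘⋯∘f_1 has matrix entries F_{a,b} = (b − a + 1)λ_{a,b} for 2 ≤ a ≤ b ≤ n, F_{1,1} = F_{n+1,n+1} = 1, and F_{a,b} = 0 otherwise. -/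
/-- Let `f_i : ℂ^{n+1} → ℂ^{n+1}` (for `1 ≤ i ≤ n−1`) be the matrices of
the transversal slice, with entries (in `1`-based labels `p = ↑p' + 1`, `q = ↑q' + 1` for
`p', q' : Fin (n+1)`): `(f_i)_{p,q} = 1` if `p = q ≠ i+1`, `(f_i)_{p,q} = λ_{p,q}` if
`2 ≤ p ≤ i+1 ≤ q ≤ n`, and `0` otherwise.  Then the composition `F = f_{n-1} ∘ ⋯ ∘ f_1`
has entries `F_{a,b} = (b − a + 1)·λ_{a,b}` for `2 ≤ a ≤ b ≤ n`,
`F_{1,1} = F_{n+1,n+1} = 1`, and `F_{a,b} = 0` otherwise. -/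
theorem transversal_slice_composition (n : ℕ) (hn : 2 ≤ n)
    (lam : ℕ → ℕ → ℂ)
    (f : ℕ → Matrix (Fin (n + 1)) (Fin (n + 1)) ℂ)
    (hf : ∀ i, 1 ≤ i → i ≤ n - 1 → ∀ p q : Fin (n + 1),
      f i p q =
        if (p : ℕ) = (q : ℕ) ∧ (p : ℕ) + 1 ≠ i + 1 then 1
        else if 2 ≤ (p : ℕ) + 1 ∧ (p : ℕ) + 1 ≤ i + 1 ∧ i + 1 ≤ (q : ℕ) + 1 ∧
            (q : ℕ) + 1 ≤ n then lam ((p : ℕ) + 1) ((q : ℕ) + 1)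
        else 0)
    (F : Matrix (Fin (n + 1)) (Fin (n + 1)) ℂ)
    (hF : F = (List.range (n - 1)).foldl (fun A k => f (k + 1) * A) 1) :
    ∀ p q : Fin (n + 1),
      F p q =
        if 2 ≤ (p : ℕ) + 1 ∧ (p : ℕ) + 1 ≤ (q : ℕ) + 1 ∧ (q : ℕ) + 1 ≤ n then
          ((((q : ℕ) + 1) - ((p : ℕ) + 1) + 1 : ℕ) : ℂ) * lam ((p : ℕ) + 1) ((q : ℕ) + 1)
        else if (p : ℕ) = (q : ℕ) then 1
        else 0 := by
  have key : ∀ m : ℕ, m ≤ n - 1 → ∀ p q : Fin (n + 1),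
      ((List.range m).foldl (fun A k => f (k + 1) * A)
          (1 : Matrix (Fin (n + 1)) (Fin (n + 1)) ℂ)) p q =
        if 1 ≤ (p : ℕ) ∧ (p : ℕ) ≤ m ∧ (p : ℕ) ≤ (q : ℕ) ∧ (q : ℕ) ≤ n - 1 then
          ((min (q : ℕ) m - (p : ℕ) + 1 : ℕ) : ℂ) * lam ((p : ℕ) + 1) ((q : ℕ) + 1)
        else if (p : ℕ) = (q : ℕ) then 1 else 0 := by
    intro m
    induction m with
    | zero =>
        intro _ p q
        simp only [List.range_zero, List.foldl_nil, Matrix.one_apply, Fin.ext_iff]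
        split_ifs <;> first | rfl | omega
    | succ m ih =>
        intro hm p q
        have ihm := ih (by omega)
        rw [List.range_succ, List.foldl_append, List.foldl_cons, List.foldl_nil,
          Matrix.mul_apply]
        set P := (List.range m).foldl (fun A k => f (k + 1) * A)
          (1 : Matrix (Fin (n + 1)) (Fin (n + 1)) ℂ) with hP
        have hsplit : ∀ r : Fin (n + 1), f (m + 1) p r =
            (if (p : ℕ) = (r : ℕ) ∧ (p : ℕ) ≠ m + 1 then 1 else 0)
            + (if 1 ≤ (p : ℕ) ∧ (p : ℕ) ≤ m + 1 ∧ m + 1 ≤ (r : ℕ) ∧ (r : ℕ) ≤ n - 1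
                then lam ((p : ℕ) + 1) ((r : ℕ) + 1) else 0) := by
          intro r
          rw [hf (m + 1) (by omega) (by omega)]
          split_ifs <;> first | (exfalso; omega) | norm_num
        simp_rw [hsplit, add_mul, Finset.sum_add_distrib]
        have hS1 : (∑ r : Fin (n + 1),
            (if (p : ℕ) = (r : ℕ) ∧ (p : ℕ) ≠ m + 1 then (1 : ℂ) else 0) * P r q)
            = if (p : ℕ) ≠ m + 1 then P p q else 0 := by
          rw [Finset.sum_eq_single p]
          · by_cases h : (p : ℕ) = m + 1 <;> simp [h]
          · intro r _ hr
            rw [if_neg, zero_mul]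
            exact fun h => hr (Fin.ext h.1.symm)
          · simp
        have hS2 : (∑ r : Fin (n + 1),
            (if 1 ≤ (p : ℕ) ∧ (p : ℕ) ≤ m + 1 ∧ m + 1 ≤ (r : ℕ) ∧ (r : ℕ) ≤ n - 1
              then lam ((p : ℕ) + 1) ((r : ℕ) + 1) else 0) * P r q)
            = if 1 ≤ (p : ℕ) ∧ (p : ℕ) ≤ m + 1 ∧ m + 1 ≤ (q : ℕ) ∧ (q : ℕ) ≤ n - 1
                then lam ((p : ℕ) + 1) ((q : ℕ) + 1) else 0 := by
          rw [Finset.sum_eq_single q]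
          · by_cases h : 1 ≤ (p : ℕ) ∧ (p : ℕ) ≤ m + 1 ∧ m + 1 ≤ (q : ℕ) ∧ (q : ℕ) ≤ n - 1
            · rw [if_pos h, ihm q q,
                if_neg (show ¬(1 ≤ (q : ℕ) ∧ (q : ℕ) ≤ m ∧ (q : ℕ) ≤ (q : ℕ) ∧
                  (q : ℕ) ≤ n - 1) from by omega), if_pos rfl, mul_one]
            · rw [if_neg h, zero_mul]
          · intro r _ hr
            by_cases h : 1 ≤ (p : ℕ) ∧ (p : ℕ) ≤ m + 1 ∧ m + 1 ≤ (r : ℕ) ∧ (r : ℕ) ≤ n - 1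
            · rw [if_pos h, ihm r q,
                if_neg (show ¬(1 ≤ (r : ℕ) ∧ (r : ℕ) ≤ m ∧ (r : ℕ) ≤ (q : ℕ) ∧
                  (q : ℕ) ≤ n - 1) from by omega),
                if_neg (fun hh => hr (Fin.ext hh)), mul_zero]
            · rw [if_neg h, zero_mul]
          · intro hq
            exact absurd (Finset.mem_univ q) hq
        rw [hS1, hS2, ihm p q]
        split_ifs <;>
          first
          | rfl
          | (exfalso; omega)
          | (rw [show ((q : ℕ) ⊓ (m + 1) - (p : ℕ) + 1)
                = ((q : ℕ) ⊓ m - (p : ℕ) + 1) + 1 from by omega]; push_cast; ring)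
          | (rw [show ((q : ℕ) ⊓ (m + 1)) = (q : ℕ) ⊓ m from by omega]; ring)
          | (rw [show ((q : ℕ) ⊓ (m + 1) - (p : ℕ) + 1) = 1 from by omega]; norm_num)
          | norm_num
  intro p q
  rw [hF, key (n - 1) le_rfl p q]
  by_cases h : 1 ≤ (p : ℕ) ∧ (p : ℕ) ≤ n - 1 ∧ (p : ℕ) ≤ (q : ℕ) ∧ (q : ℕ) ≤ n - 1
  · rw [if_pos h,
      if_pos (show 2 ≤ (p : ℕ) + 1 ∧ (p : ℕ) + 1 ≤ (q : ℕ) + 1 ∧ (q : ℕ) + 1 ≤ n from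
        by omega),
      show ((q : ℕ) ⊓ (n - 1) - (p : ℕ) + 1) = (q : ℕ) + 1 - ((p : ℕ) + 1) + 1 from by omega]
  · rw [if_neg h,
      if_neg (show ¬(2 ≤ (p : ℕ) + 1 ∧ (p : ℕ) + 1 ≤ (q : ℕ) + 1 ∧ (q : ℕ) + 1 ≤ n) from
        by omega)]
end
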